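/- In a globular multicategory with homomorphism types, if f, f' : Γ ⊕ H_x → A are parallel terms such that r_x ; f = r_x ; f', then there exists a transformation φ : f → f', namely J_x^{f,f'}(r_x ; f ; r_A). If moreover the homomorphism types are strict, then f = f'. -/

import Mathlib

/-!
STATEMENT 12: In a globular multicategory with homomorphism types, if
f, f' : Γ ⊕ H_x → A are parallel terms such that r_x ; f = r_x ; f', then there
exists a transformation φ : f → f', namely J_x^{f,f'}(r_x ; f ; r_A). If moreover
the homomorphism types are strict, then f = f'.
-/

open CategoryTheory

/-- A reflexive globular multigraph, in a flat (single-sorted, dimension-indexed)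
presentation: types, contexts (pasting diagrams of types), terms, variables and
substitutions, together with globular boundary structure and the reflexive
(homomorphism-type) structure `H`, `r`. -/
structure RGraph : Type 1 where
  Ty : Type
  Ctx : Type
  Tm : Type
  Var : Type
  Sub : Type
  tyDim : Ty → ℕ
  tmDim : Tm → ℕ
  varDim : Var → ℕ
  tySrc : Ty → Ty
  tyTgt : Ty → Ty
  ctxSrc : Ctx → Ctx
  ctxTgt : Ctx → Ctx
  /-- the domain context of a term -/
  dom : Tm → Ctx
  /-- the codomain type of a term -/
  cod : Tm → Ty
  tmSrc : Tm → Tm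
  tmTgt : Tm → Tm
  /-- the context a variable belongs to -/
  varCtx : Var → Ctx
  /-- the type of a variable -/
  varTy : Var → Ty
  /-- the context `[A]` consisting of a single type -/
  single : Ty → Ctx
  /-- the context `Γ` viewed as a degenerate higher-dimensional context `Γ⁺` -/
  degen : Ctx → Ctx
  /-- a variable `x` of `Γ` viewed as a variable of `degen Γ` -/
  varDegen : Var → Var
  /-- the variable of the source context corresponding to a variable -/
  varSrc : Var → Var
  /-- the variable of the target context corresponding to a variable -/
  varTgt : Var → Var
  /-- the target variable of the context `[A]` -/
  tVar : Ty → Var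
  /-- the source variable of the context `[A]` -/
  sVar : Ty → Var
  sdom : Sub → Ctx
  scod : Sub → Ctx
  ssrc : Sub → Sub
  stgt : Sub → Sub
  /-- the homomorphism type `H_A : A ↛ A` -/
  H : Ty → Ty
  /-- the reflexivity term `r_A : A → H_A` -/
  r : Ty → Tm
  /-- the context `Γ ⊕ H_x` obtained by adding a homomorphism type at `x` -/
  addH : Var → Ctx
  tyDim_H : ∀ A, tyDim (H A) = tyDim A + 1
  tySrc_H : ∀ A, tySrc (H A) = A
  tyTgt_H : ∀ A, tyTgt (H A) = A
  dom_r : ∀ A, dom (r A) = degen (single A)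
  cod_r : ∀ A, cod (r A) = H A
  ctxSrc_degen : ∀ Γ, ctxSrc (degen Γ) = Γ
  ctxTgt_degen : ∀ Γ, ctxTgt (degen Γ) = Γ
  varCtx_varDegen : ∀ x, varCtx (varDegen x) = degen (varCtx x)
  addH_varDegen : ∀ x, addH (varDegen x) = degen (addH x)
  varSrc_varDegen : ∀ x, varSrc (varDegen x) = x
  varTgt_varDegen : ∀ x, varTgt (varDegen x) = x

/-- A globular multicategory with homomorphism types, in a flat presentation:
a reflexive globular multigraph together with composition operations and J-terms,
subject to their defining laws. -/
structure GMH : Type 1 extends RGraph where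
  /-- precomposition `f ↦ r_x ; f` with a reflexivity substitution -/
  rcomp : Var → Tm → Tm
  /-- postcomposition `f ↦ f ; r_A` with a reflexivity term -/
  hcomp : Tm → Tm
  /-- pointwise postcomposition of a substitution with reflexivity terms -/
  hcompS : Sub → Sub
  /-- composition `f ; g` of a substitution/term into a term -/
  subst : Tm → Tm → Tm
  /-- pasting `f ⊙ g` of terms along a common top-dimensional boundary -/
  odot : Tm → Tm → Tm
  /-- the identity term `id_A : [A] → A` -/
  idTm : Ty → Tm
  /-- the basic J-term `J_x(f)` -/
  J0 : Var → Tm → Tm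
  /-- the boundary-compatible J-term `J_x^{j_s,j_t}(f)` -/
  Jb : Var → Tm → Tm → Tm → Tm
  dom_rcomp : ∀ x f, dom f = addH x → dom (rcomp x f) = varCtx x
  cod_rcomp : ∀ x f, cod (rcomp x f) = cod f
  dom_hcomp : ∀ f, dom (hcomp f) = degen (dom f)
  cod_hcomp : ∀ f, cod (hcomp f) = H (cod f)
  src_hcomp : ∀ f, tmSrc (hcomp f) = f
  tgt_hcomp : ∀ f, tmTgt (hcomp f) = f
  tmDim_hcomp : ∀ f, tmDim (hcomp f) = tmDim f + 1
  dom_idTm : ∀ A, dom (idTm A) = single A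
  cod_idTm : ∀ A, cod (idTm A) = A
  dom_J0 : ∀ x f, dom (J0 x f) = addH x
  cod_J0 : ∀ x f, cod (J0 x f) = cod f
  /-- `r_x ; J_x(f) = f` -/
  rcomp_J0 : ∀ x f, dom f = varCtx x → rcomp x (J0 x f) = f
  /-- the defining properties of the boundary-compatible J-terms -/
  Jb_spec : ∀ x js jt g,
    dom g = varCtx x →
    dom js = addH (varSrc x) → dom jt = addH (varTgt x) →
    cod js = tySrc (cod g) → cod jt = tyTgt (cod g) →
    rcomp (varSrc x) js = tmSrc g → rcomp (varTgt x) jt = tmTgt g →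
    tmSrc (Jb x js jt g) = js ∧ tmTgt (Jb x js jt g) = jt ∧
      rcomp x (Jb x js jt g) = g ∧ dom (Jb x js jt g) = addH x ∧
      cod (Jb x js jt g) = cod g
  tmDim_tmSrc : ∀ f, 0 < tmDim f → tmDim (tmSrc f) + 1 = tmDim f
  cod_tmSrc : ∀ f, cod (tmSrc f) = tySrc (cod f)
  cod_tmTgt : ∀ f, cod (tmTgt f) = tyTgt (cod f)
  dom_tmSrc : ∀ f, dom (tmSrc f) = ctxSrc (dom f)
  dom_tmTgt : ∀ f, dom (tmTgt f) = ctxTgt (dom f)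
  /-- `f ; r_A` is a left identity for the composition `φ ∘ g = (φ ⊙ g) ; J_{tA}(id_A)` -/
  circ_unit_left : ∀ f g, tmSrc g = f →
    subst (odot (hcomp f) g) (J0 (tVar (cod f)) (idTm (cod f))) = g
  /-- `f ; r_A` is a right identity for the composition `h ∘ φ = (h ⊙ φ) ; J_{sA}(id_A)` -/
  circ_unit_right : ∀ f h, tmTgt h = f →
    subst (odot h (hcomp f)) (J0 (sVar (cod f)) (idTm (cod f))) = h

namespace GMH

/-- A globular multicategory has *strict* homomorphism types when precomposition
with reflexivity substitutions is injective on parallel terms: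
`r_x ; f = r_x ; f'` implies `f = f'`. -/
def StrictHomTypes (M : GMH) : Prop :=
  ∀ (x : M.Var) (f f' : M.Tm), M.dom f = M.addH x → M.dom f' = M.addH x →
    M.cod f = M.cod f' → M.rcomp x f = M.rcomp x f' → f = f'

end GMH

/-!
The term `r_x ; f ; r_A` is the identity transformation on `r_x ; f = r_x ; f'`, living over
the degenerate variable `x⁺` of `(Γ ⊕ H_x)⁺`. The source and target variables of `x⁺` are `x`
itself, so `f` and `f'` are admissible boundary data for a J-term at `x⁺`, and
`J_{x⁺}^{f,f'}(r_x ; f ; r_A)` extends that identity to a transformation `f → f'`.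
-/

namespace GMH

variable (M : GMH)

def IsTransformation (φ f f' : M.Tm) : Prop :=
  M.tmSrc φ = f ∧ M.tmTgt φ = f' ∧ M.dom φ = M.degen (M.dom f) ∧ M.cod φ = M.H (M.cod f)

def reflexTransformation (x : M.Var) (f f' : M.Tm) : M.Tm :=
  M.Jb (M.varDegen x) f f' (M.hcomp (M.rcomp x f))

theorem isTransformation_reflexTransformation {x : M.Var} {f f' : M.Tm}
    (hf : M.dom f = M.addH x) (hf' : M.dom f' = M.addH x) (hcod : M.cod f = M.cod f')
    (hr : M.rcomp x f = M.rcomp x f') :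
    M.IsTransformation (M.reflexTransformation x f f') f f' := by
  have hdom : M.dom (M.hcomp (M.rcomp x f)) = M.varCtx (M.varDegen x) := by
    rw [M.dom_hcomp, M.dom_rcomp x f hf, M.varCtx_varDegen]
  have hsrc : M.cod f = M.tySrc (M.cod (M.hcomp (M.rcomp x f))) := by
    rw [M.cod_hcomp, M.cod_rcomp, M.tySrc_H]
  have htgt : M.cod f' = M.tyTgt (M.cod (M.hcomp (M.rcomp x f))) := by
    rw [M.cod_hcomp, M.cod_rcomp, M.tyTgt_H, hcod]
  obtain ⟨hφs, hφt, -, hφdom, hφcod⟩ :=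
    M.Jb_spec (M.varDegen x) f f' _ hdom
      (by rwa [M.varSrc_varDegen]) (by rwa [M.varTgt_varDegen]) hsrc htgt
      (by rw [M.varSrc_varDegen, M.src_hcomp])
      (by rw [M.varTgt_varDegen, M.tgt_hcomp, hr])
  refine ⟨hφs, hφt, ?_, ?_⟩
  · rw [reflexTransformation, hφdom, M.addH_varDegen, hf]
  · rw [reflexTransformation, hφcod, M.cod_hcomp, M.cod_rcomp]

end GMH

theorem reflexEquiv_general (M : GMH) (x : M.Var) (A : M.Ty) (f f' : M.Tm)
    (hf : M.dom f = M.addH x) (hf' : M.dom f' = M.addH x)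
    (hA : M.cod f = A) (hA' : M.cod f' = A)
    (hr : M.rcomp x f = M.rcomp x f') :
    (M.tmSrc (M.Jb (M.varDegen x) f f' (M.hcomp (M.rcomp x f))) = f ∧
     M.tmTgt (M.Jb (M.varDegen x) f f' (M.hcomp (M.rcomp x f))) = f' ∧
     M.dom (M.Jb (M.varDegen x) f f' (M.hcomp (M.rcomp x f))) = M.degen (M.addH x) ∧
     M.cod (M.Jb (M.varDegen x) f f' (M.hcomp (M.rcomp x f))) = M.H A) ∧
    (M.StrictHomTypes → f = f') := by
  have hcod : M.cod f = M.cod f' := hA.trans hA'.symm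
  obtain ⟨hsrc, htgt, hdom, hcodφ⟩ :=
    M.isTransformation_reflexTransformation hf hf' hcod hr
  rw [hf] at hdom
  rw [hA] at hcodφ
  exact ⟨⟨hsrc, htgt, hdom, hcodφ⟩, fun hstrict => hstrict x f f' hf hf' hcod hr⟩

/-- Lemma `reflexEquiv`. In a globular multicategory with
homomorphism types, if `f, f' : Γ ⊕ H_x → A` are parallel terms with
`r_x ; f = r_x ; f'`, then `J_x^{f,f'}(r_x ; f ; r_A)` is a transformation
`φ : f → f'` (a term `Γ ⊕ H_x → H_A` with source `f` and target `f'`).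
If moreover the homomorphism types are strict, then `f = f'`. -/
theorem reflexEquiv (M : GMH) (x : M.Var) (Γ : M.Ctx) (A : M.Ty) (f f' : M.Tm)
    (hΓ : M.varCtx x = Γ)
    (hf : M.dom f = M.addH x) (hf' : M.dom f' = M.addH x)
    (hA : M.cod f = A) (hA' : M.cod f' = A)
    (hr : M.rcomp x f = M.rcomp x f') :
    (M.tmSrc (M.Jb (M.varDegen x) f f' (M.hcomp (M.rcomp x f))) = f ∧
     M.tmTgt (M.Jb (M.varDegen x) f f' (M.hcomp (M.rcomp x f))) = f' ∧
     M.dom (M.Jb (M.varDegen x) f f' (M.hcomp (M.rcomp x f))) = M.degen (M.addH x) ∧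
     M.cod (M.Jb (M.varDegen x) f f' (M.hcomp (M.rcomp x f))) = M.H A) ∧
    (M.StrictHomTypes → f = f') :=
  reflexEquiv_general M x A f f' hf hf' hA hA' hr
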